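/- arXiv:2410.06837 — 8 statements merged into one kernel-verified Lean document; each statement's English description precedes it below -/
import Mathlib

section
/- Let S be a string and let w be a nonempty string with occ_S(w) ≥ 2. If φ_S(w) ≥ 1 (equivalently, there exists a pair (α, β) of characters with occ_S(αwβ) = occ_S(αw) = occ_S(wβ) = 1), then w is a maximal repeat of S. -/
variable {Γ : Type*} [DecidableEq Γ]

/-- `occ S w` is the number of occurrences of `w` as a contiguous substring of `S`,
i.e., the number of (0-based) indices `i` with `S[i..i+|w|-1] = w`. -/
def occ (S w : List Γ) : ℕ :=
  ((List.range S.length).filter fun i => (S.drop i).take w.length = w).length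

/-- `Phi S w` is the set of pairs `(α, β)` of characters such that
`occ S (αwβ) = occ S (αw) = occ S (wβ) = 1`. -/
def Phi (S w : List Γ) : Set (Γ × Γ) :=
  {p | occ S (p.1 :: (w ++ [p.2])) = 1 ∧ occ S (p.1 :: w) = 1 ∧ occ S (w ++ [p.2]) = 1}

/-- The net frequency of `w` in `S`. -/
noncomputable def phi (S w : List Γ) : ℕ := (Phi S w).ncard

/-- `w` is a left-maximal repeat candidate: `w` is a prefix of `S`, or
two distinct characters immediately precede occurrences of `w` in `S`. -/
def LeftMaximal (S w : List Γ) : Prop :=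
  w <+: S ∨ ∃ α α' : Γ, α ≠ α' ∧ 1 ≤ occ S (α :: w) ∧ 1 ≤ occ S (α' :: w)

/-- `w` is a right-maximal repeat candidate: `w` is a suffix of `S`, or
two distinct characters immediately follow occurrences of `w` in `S`. -/
def RightMaximal (S w : List Γ) : Prop :=
  w <:+ S ∨ ∃ β β' : Γ, β ≠ β' ∧ 1 ≤ occ S (w ++ [β]) ∧ 1 ≤ occ S (w ++ [β'])

/-- `w` is a maximal repeat of `S`: a nonempty string occurring at least twice in `S`
that is both left-maximal and right-maximal. -/
def MaximalRepeat (S w : List Γ) : Prop :=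
  w ≠ [] ∧ 2 ≤ occ S w ∧ LeftMaximal S w ∧ RightMaximal S w

lemma occ_eq_card (S w : List Γ) :
    occ S w = ((Finset.range S.length).filter (fun i => (S.drop i).take w.length = w)).card :=
  rfl

lemma one_le_occ {S w : List Γ} {i : ℕ} (h1 : i < S.length)
    (h2 : (S.drop i).take w.length = w) : 1 ≤ occ S w := by
  rw [occ_eq_card]
  refine Finset.card_pos.mpr ⟨i, ?_⟩
  simp [Finset.mem_filter, h1, h2]

lemma two_le_occ {S w : List Γ} {i j : ℕ} (hne : i ≠ j)
    (hi1 : i < S.length) (hi2 : (S.drop i).take w.length = w)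
    (hj1 : j < S.length) (hj2 : (S.drop j).take w.length = w) : 2 ≤ occ S w := by
  rw [occ_eq_card]
  refine Finset.one_lt_card_iff.mpr ⟨i, j, ?_, ?_, hne⟩ <;>
    simp [Finset.mem_filter, hi1, hi2, hj1, hj2]

lemma exists_two_occ {S w : List Γ} (h : 2 ≤ occ S w) :
    ∃ i j, i ≠ j ∧ (i < S.length ∧ (S.drop i).take w.length = w) ∧
      (j < S.length ∧ (S.drop j).take w.length = w) := by
  rw [occ_eq_card] at h
  obtain ⟨i, j, hi, hj, hne⟩ := Finset.one_lt_card_iff.mp h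
  simp only [Finset.mem_filter, Finset.mem_range] at hi hj
  exact ⟨i, j, hne, hi, hj⟩

/-- If `w` occurs at position `i ≥ 1`, then `S[i-1] :: w` occurs at `i-1`. -/
lemma left_ext {S w : List Γ} {i : ℕ} (hi1 : i < S.length)
    (hi2 : (S.drop i).take w.length = w) (hip : 1 ≤ i) :
    ∃ (h : i - 1 < S.length),
      (S.drop (i - 1)).take (S[i-1] :: w).length = S[i-1] :: w := by
  have h1 : i - 1 < S.length := by omega
  refine ⟨h1, ?_⟩
  have hd : S.drop (i - 1) = S[i-1] :: S.drop i := by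
    have he : i - 1 + 1 = i := by omega
    rw [List.drop_eq_getElem_cons h1, he]
  simp [hd, hi2]

/-- If `w` occurs at position `i` and is not a suffix, then `w ++ [S[i+|w|]]` occurs at `i`. -/
lemma right_ext {S w : List Γ} {i : ℕ} (hi1 : i < S.length)
    (hi2 : (S.drop i).take w.length = w) (hns : ¬ w <:+ S) :
    ∃ (h : i + w.length < S.length),
      (S.drop i).take (w ++ [S[i + w.length]]).length = w ++ [S[i + w.length]] := by
  have hlen : i + w.length < S.length := by
    by_contra hle
    apply hns
    have : (S.drop i).length ≤ w.length := by simp; omega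
    rw [List.take_of_length_le this] at hi2
    exact hi2 ▸ List.drop_suffix i S
  refine ⟨hlen, ?_⟩
  have hget : (S.drop i)[w.length]? = some S[i + w.length] := by
    rw [List.getElem?_drop]
    exact List.getElem?_eq_getElem hlen
  simp [List.take_succ, hi2, hget]

/-- If a nonempty repeat `w` of `S` has positive net frequency,
then `w` is a maximal repeat of `S`. -/
theorem stmt0 (S w : List Γ) (hw : w ≠ []) (hrep : 2 ≤ occ S w)
    (hphi : 1 ≤ phi S w) :
    MaximalRepeat S w := by
  have hne : (Phi S w).Nonempty := Set.nonempty_of_ncard_ne_zero (by unfold phi at hphi; omega)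
  obtain ⟨⟨α, β⟩, hαwβ, hαw, hwβ⟩ := hne
  obtain ⟨i, j, hij, ⟨hi1, hi2⟩, ⟨hj1, hj2⟩⟩ := exists_two_occ hrep
  refine ⟨hw, hrep, ?_, ?_⟩
  · -- LeftMaximal
    by_cases hp : w <+: S
    · exact Or.inl hp
    right
    have hipos : 1 ≤ i := by
      rcases Nat.eq_zero_or_pos i with h0 | h; swap; · exact h
      subst h0
      exact absurd (hi2 ▸ List.take_prefix w.length S) hp
    have hjpos : 1 ≤ j := by
      rcases Nat.eq_zero_or_pos j with h0 | h; swap; · exact h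
      subst h0
      exact absurd (hj2 ▸ List.take_prefix w.length S) hp
    obtain ⟨hi1', hi2'⟩ := left_ext hi1 hi2 hipos
    obtain ⟨hj1', hj2'⟩ := left_ext hj1 hj2 hjpos
    by_cases hc : S[i-1] = S[j-1]
    · -- same preceding character c; occ (c :: w) ≥ 2, so c ≠ α
      have h2 : 2 ≤ occ S (S[i-1] :: w) :=
        two_le_occ (by omega) hi1' hi2' hj1' (hc ▸ hj2')
      have hcα : S[i-1] ≠ α := fun h => by rw [h, hαw] at h2; omega
      exact ⟨S[i-1], α, hcα, one_le_occ hi1' hi2', hαw.ge⟩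
    · exact ⟨S[i-1], S[j-1], hc, one_le_occ hi1' hi2', one_le_occ hj1' hj2'⟩
  · -- RightMaximal
    by_cases hs : w <:+ S
    · exact Or.inl hs
    right
    obtain ⟨hi1', hi2'⟩ := right_ext hi1 hi2 hs
    obtain ⟨hj1', hj2'⟩ := right_ext hj1 hj2 hs
    by_cases hc : S[i + w.length] = S[j + w.length]
    · have h2 : 2 ≤ occ S (w ++ [S[i + w.length]]) :=
        two_le_occ hij hi1 hi2' hj1 (by rw [hc]; exact hj2')
      have hcβ : S[i + w.length] ≠ β := fun h => by rw [h, hwβ] at h2; omega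
      exact ⟨S[i + w.length], β, hcβ, one_le_occ hi1 hi2', hwβ.ge⟩
    · exact ⟨S[i + w.length], S[j + w.length], hc,
        one_le_occ hi1 hi2', one_le_occ hj1 hj2'⟩
end

section
/- Let S be a string and let w be a nonempty string with occ_S(w) ≥ 2. Then φ_S(w) ≤ min(|Σ^L_w|, |Σ^R_w|), where Σ^L_w = {α ∈ Σ : occ_S(αw) ≥ 1} is the (finite) set of left-extensions of w in S and Σ^R_w = {β ∈ Σ : occ_S(wβ) ≥ 1} is the (finite) set of right-extensions of w in S. -/
variable {Γ : Type*} [DecidableEq Γ]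

/-!
If `(α, β) ∈ Φ_S(w)`, then `αwβ` occurs in `S`, and its position is pinned down both by the
unique occurrence of `αw` and (shifted by one) by the unique occurrence of `wβ`. Hence `α` alone,
and likewise `β` alone, determines the pair, so `Φ_S(w)` injects into both extension sets.
-/

namespace List

section OccursAt

variable {α : Type*} {S u v : List α} {i j : ℕ}

def OccursAt (S u : List α) (i : ℕ) : Prop :=
  i < S.length ∧ (S.drop i).take u.length = u

theorem OccursAt.of_isPrefix (huv : u <+: v) (hv : S.OccursAt v i) : S.OccursAt u i := by
  refine ⟨hv.1, ?_⟩
  calc (S.drop i).take u.length = ((S.drop i).take v.length).take u.length := by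
        rw [take_take, min_eq_left huv.length_le]
    _ = u := by rw [hv.2, ← prefix_iff_eq_take.mp huv]

theorem OccursAt.tail (hu : u ≠ []) {a : α} (h : S.OccursAt (a :: u) i) :
    S.OccursAt u (i + 1) := by
  have hlen := congrArg length h.2
  simp only [length_take, length_drop, length_cons] at hlen
  have := length_pos_iff.mpr hu
  refine ⟨by omega, ?_⟩
  simpa [drop_take, drop_drop, Nat.add_comm] using congrArg (drop 1) h.2

theorem OccursAt.mem {a : α} (h : S.OccursAt u i) (ha : a ∈ u) : a ∈ S :=
  (take_sublist _ _ |>.trans (drop_sublist _ _)).mem (h.2 ▸ ha)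

theorem OccursAt.eq_of_length_eq (hu : S.OccursAt u i) (hv : S.OccursAt v i)
    (hlen : u.length = v.length) : u = v := by
  rw [← hu.2, ← hv.2, hlen]

end OccursAt

end List

open List

section Occ

variable {S u : List Γ} {i j : ℕ}

theorem one_le_occ_iff : 1 ≤ occ S u ↔ ∃ i, S.OccursAt u i := by
  simp [occ, Nat.one_le_iff_ne_zero, OccursAt]

theorem List.OccursAt.eq_of_occ_eq_one (h : occ S u = 1) (hi : S.OccursAt u i)
    (hj : S.OccursAt u j) : i = j := by
  obtain ⟨k, hk⟩ := length_eq_one_iff.mp h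
  have mem : ∀ {n}, S.OccursAt u n → n ∈ [k] := fun hn => by
    rw [← hk]; simpa [mem_filter, OccursAt] using hn
  rw [mem_singleton.mp (mem hi), mem_singleton.mp (mem hj)]

end Occ

theorem finite_setOf_one_le_occ (S : List Γ) (f : Γ → List Γ) (hf : ∀ a, a ∈ f a) :
    {a | 1 ≤ occ S (f a)}.Finite :=
  S.finite_toSet.subset fun a ha => (one_le_occ_iff.mp ha).choose_spec.mem (hf a)

theorem injOn_fst_Phi (S w : List Γ) : Set.InjOn Prod.fst (Phi S w) := by
  rintro ⟨a, b⟩ ⟨hab, ha, -⟩ ⟨a', b'⟩ ⟨hab', -, -⟩ (rfl : a = a')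
  obtain ⟨i, hi⟩ := one_le_occ_iff.mp hab.ge
  obtain ⟨j, hj⟩ := one_le_occ_iff.mp hab'.ge
  have hprefix : ∀ c, a :: w <+: a :: (w ++ [c]) := fun c => ⟨[c], by simp⟩
  obtain rfl : i = j :=
    (hi.of_isPrefix (hprefix b)).eq_of_occ_eq_one ha (hj.of_isPrefix (hprefix b'))
  simpa using hi.eq_of_length_eq hj (by simp)

theorem injOn_snd_Phi (S w : List Γ) : Set.InjOn Prod.snd (Phi S w) := by
  rintro ⟨a, b⟩ ⟨hab, -, hb⟩ ⟨a', b'⟩ ⟨hab', -, -⟩ (rfl : b = b')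
  obtain ⟨i, hi⟩ := one_le_occ_iff.mp hab.ge
  obtain ⟨j, hj⟩ := one_le_occ_iff.mp hab'.ge
  obtain rfl : i = j := by
    have := (hi.tail (by simp)).eq_of_occ_eq_one hb (hj.tail (by simp))
    omega
  simpa using hi.eq_of_length_eq hj (by simp)

theorem phi_le_ncard_left_extensions (S w : List Γ) :
    phi S w ≤ {a | 1 ≤ occ S (a :: w)}.ncard :=
  Set.ncard_le_ncard_of_injOn Prod.fst (fun _ hp => hp.2.1.ge) (injOn_fst_Phi S w)
    (finite_setOf_one_le_occ S _ fun _ => mem_cons_self)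

theorem phi_le_ncard_right_extensions (S w : List Γ) :
    phi S w ≤ {b | 1 ≤ occ S (w ++ [b])}.ncard :=
  Set.ncard_le_ncard_of_injOn Prod.snd (fun _ hp => hp.2.2.ge) (injOn_snd_Phi S w)
    (finite_setOf_one_le_occ S _ fun _ => mem_append_right _ (mem_singleton_self _))

theorem stmt4_general (S w : List Γ) :
    phi S w ≤ min {α : Γ | 1 ≤ occ S (α :: w)}.ncard {β : Γ | 1 ≤ occ S (w ++ [β])}.ncard :=
  le_min (phi_le_ncard_left_extensions S w) (phi_le_ncard_right_extensions S w)

/-- The net frequency of a repeat `w` in `S` is at most the minimum of the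
number of its left-extensions and the number of its right-extensions in `S`. -/
theorem stmt4 (S w : List Γ) (hw : w ≠ []) (hrep : 2 ≤ occ S w) :
    phi S w ≤ min {α : Γ | 1 ≤ occ S (α :: w)}.ncard {β : Γ | 1 ≤ occ S (w ++ [β])}.ncard :=
  stmt4_general S w
end

section
/- For any string S of length n ≥ 2, the sum of φ_S(w) over all distinct nonempty strings w with occ_S(w) ≥ 2 is at most 2n − 2. -/
/-!
Attach to every pair `(α, β) ∈ Φ_S(w)` the index in `S` of the `β` of the unique occurrence of
`αwβ`; this index lies in `[1, |S|)`. Two such pairs, for repeats `w` and `w'` with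
`|w| < |w'|`, cannot share the index: `αw` would then be a suffix of `w'`, so it would occur at
least as often as the repeat `w'`, whereas it occurs once. Equal lengths force equal
occurrences. Hence the sum is at most `|S| - 1 ≤ 2|S| - 2`.
-/

variable {Γ : Type*} [DecidableEq Γ]

open Finset

def OccursAt {α : Type*} (S u : List α) (i : ℕ) : Prop := (S.drop i).take u.length = u

instance (S u : List Γ) : DecidablePred (OccursAt S u) :=
  fun _ => inferInstanceAs (Decidable (_ = _))

namespace OccursAt

variable {α : Type*} {S u v : List α} {i : ℕ}

theorem isInfix (h : OccursAt S u i) : u <:+: S :=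
  h ▸ (List.take_prefix _ _).isInfix.trans (List.drop_suffix _ _).isInfix

theorem add_length_le (h : OccursAt S u i) (hu : u ≠ []) : i + u.length ≤ S.length := by
  have hlen := congrArg List.length h
  rw [List.length_take, List.length_drop] at hlen
  have := List.length_pos_iff.mpr hu
  omega

theorem of_append_left (h : OccursAt S (u ++ v) i) : OccursAt S u i := by
  have h' := congrArg (List.take u.length) h
  rwa [List.take_take, List.length_append, min_eq_left (by omega), List.take_left] at h'

theorem of_append_right (h : OccursAt S (u ++ v) i) : OccursAt S v (i + u.length) := by
  have h' := congrArg (List.drop u.length) h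
  rw [List.drop_take, List.drop_drop, List.drop_left, List.length_append,
    Nat.add_sub_cancel_left] at h'
  exact h'

theorem eq_of_length_eq (hu : OccursAt S u i) (hv : OccursAt S v i)
    (h : u.length = v.length) : u = v := by
  rw [OccursAt] at hu hv
  rw [← hu, ← hv, h]

theorem cons_append_singleton_inj {w w' : List α} {a b a' b' : α}
    (h : OccursAt S (a :: (w ++ [b])) i) (h' : OccursAt S (a' :: (w' ++ [b'])) i)
    (hlen : w.length = w'.length) : w = w' ∧ a = a' ∧ b = b' := by
  obtain ⟨ha, hwb⟩ := List.cons_eq_cons.mp (h.eq_of_length_eq h' (by simp [hlen]))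
  obtain ⟨hw, hb⟩ := List.append_inj' hwb rfl
  exact ⟨hw, ha, by simpa using hb⟩

end OccursAt

section Occ

variable {S u v : List Γ}

theorem occ_eq_card_s5 (S u : List Γ) : occ S u = #{i ∈ range S.length | OccursAt S u i} := rfl

theorem mem_filter_occursAt (hu : u ≠ []) {i : ℕ} :
    i ∈ ({i ∈ range S.length | OccursAt S u i} : Finset ℕ) ↔ OccursAt S u i := by
  rw [mem_filter, mem_range]
  refine ⟨And.right, fun h => ⟨?_, h⟩⟩
  have := h.add_length_le hu
  have := List.length_pos_iff.mpr hu
  omega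

theorem exists_occursAt_of_occ_pos (h : 0 < occ S u) : ∃ i, OccursAt S u i := by
  rw [occ_eq_card_s5] at h
  obtain ⟨i, hi⟩ := card_pos.mp h
  exact ⟨i, (mem_filter.mp hi).2⟩

theorem occ_append_le_occ_right (hv : v ≠ []) : occ S (u ++ v) ≤ occ S v := by
  rw [occ_eq_card_s5, occ_eq_card_s5]
  refine card_le_card_of_injOn (· + u.length) (fun i hi => ?_) (fun i _ j _ h => by simpa using h)
  have hi := (mem_filter.mp hi).2
  exact (mem_filter_occursAt hv).mpr hi.of_append_right

theorem finite_setOf_two_le_occ (S : List Γ) : {w : List Γ | w ≠ [] ∧ 2 ≤ occ S w}.Finite := by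
  refine S.sublists.toFinset.finite_toSet.subset fun w ⟨_, hw⟩ => ?_
  obtain ⟨i, hi⟩ := exists_occursAt_of_occ_pos (S := S) (u := w) (by omega)
  simpa using hi.isInfix.sublist

end Occ

section NetFrequency

variable {S w w' : List Γ} {α β α' β' : Γ} {r r' : ℕ}

instance (S w : List Γ) : DecidablePred (· ∈ Phi S w) :=
  fun _ => inferInstanceAs (Decidable (_ ∧ _ ∧ _))

theorem Phi_subset_product (S w : List Γ) :
    Phi S w ⊆ ↑(S.toFinset ×ˢ S.toFinset) := by
  rintro ⟨α, β⟩ hp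
  obtain ⟨i, hi⟩ := exists_occursAt_of_occ_pos (show 0 < occ S (α :: (w ++ [β])) by
    rw [hp.1]; exact Nat.one_pos)
  have hsub := hi.isInfix.subset
  simp only [coe_product, Set.mem_prod, List.coe_toFinset, Set.mem_ofPred_eq]
  exact ⟨hsub (by simp), hsub (by simp)⟩

theorem phi_eq_card (S w : List Γ) :
    phi S w = #{p ∈ S.toFinset ×ˢ S.toFinset | p ∈ Phi S w} := by
  rw [phi, ← Set.ncard_coe_finset, coe_filter]
  congr 1
  ext p
  exact ⟨fun hp => ⟨Phi_subset_product S w hp, hp⟩, fun hp => hp.2⟩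

theorem length_le_of_occursAt_of_add_length_eq (hw' : 2 ≤ occ S w') (hαw : occ S (α :: w) ≤ 1)
    (h : OccursAt S (α :: (w ++ [β])) r) (h' : OccursAt S (α' :: (w' ++ [β'])) r')
    (he : r + w.length = r' + w'.length) : w'.length ≤ w.length := by
  by_contra! hlt
  set k := w'.length - (w.length + 1)
  have hαw_at : OccursAt S (α :: w) r :=
    (show α :: (w ++ [β]) = (α :: w) ++ [β] by simp) ▸ h |>.of_append_left
  have hw'_at : OccursAt S w' (r' + 1) :=
    ((show α' :: (w' ++ [β']) = [α'] ++ w' ++ [β'] by simp) ▸ h').of_append_left.of_append_right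
  have hsuffix : w'.drop k = α :: w := by
    have := ((w'.take_append_drop k).symm ▸ hw'_at).of_append_right
    rw [List.length_take, min_eq_left (by omega), show r' + 1 + k = r by omega] at this
    exact this.eq_of_length_eq hαw_at (by simp; omega)
  have : occ S w' ≤ occ S (α :: w) := calc
    occ S w' = occ S (w'.take k ++ α :: w) := by rw [← hsuffix, List.take_append_drop]
    _ ≤ occ S (α :: w) := occ_append_le_occ_right (List.cons_ne_nil _ _)
  omega

theorem sum_phi_le_length_sub_one (S : List Γ) (T : Finset (List Γ))
    (hT : ∀ w ∈ T, 2 ≤ occ S w) : ∑ w ∈ T, phi S w ≤ S.length - 1 := by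
  simp only [phi_eq_card]
  rw [← card_sigma, ← Nat.card_Ico 1 S.length]
  refine card_le_card_of_forall_subsingleton
    (fun t e => ∃ r, OccursAt S (t.2.1 :: (t.1 ++ [t.2.2])) r ∧ r + t.1.length + 1 = e)
    (fun ⟨w, α, β⟩ ht => ?_) (fun e _ ⟨w, α, β⟩ ht ⟨w', α', β'⟩ ht' => ?_)
  · obtain ⟨-, hp⟩ := mem_sigma.mp ht
    obtain ⟨r, hr⟩ := exists_occursAt_of_occ_pos (show 0 < occ S (α :: (w ++ [β])) by
      rw [(mem_filter.mp hp).2.1]; exact Nat.one_pos)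
    have := hr.add_length_le (List.cons_ne_nil _ _)
    simp only [List.length_cons, List.length_append, List.length_nil] at this
    exact ⟨r + w.length + 1, mem_Ico.mpr ⟨by omega, by omega⟩, r, hr, rfl⟩
  · obtain ⟨hmem, r, hr, rfl⟩ := ht
    obtain ⟨hmem', r', hr', he⟩ := ht'
    dsimp only at hr hr' he
    obtain ⟨hw, hp⟩ := mem_sigma.mp hmem
    obtain ⟨hw', hp'⟩ := mem_sigma.mp hmem'
    have hαw : occ S (α :: w) ≤ 1 := (mem_filter.mp hp).2.2.1.le
    have hα'w' : occ S (α' :: w') ≤ 1 := (mem_filter.mp hp').2.2.1.le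
    have hle := length_le_of_occursAt_of_add_length_eq (hT w' hw') hαw hr hr' (by omega)
    have hge := length_le_of_occursAt_of_add_length_eq (hT w hw) hα'w' hr' hr (by omega)
    obtain rfl : r' = r := by omega
    obtain ⟨rfl, rfl, rfl⟩ := hr.cons_append_singleton_inj hr' (by omega)
    rfl

end NetFrequency

theorem stmt5_general (S : List Γ) :
    ∑ᶠ w ∈ {w : List Γ | w ≠ [] ∧ 2 ≤ occ S w}, phi S w ≤ 2 * S.length - 2 := by
  rw [finsum_mem_eq_finite_toFinset_sum _ (finite_setOf_two_le_occ S)]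
  have := sum_phi_le_length_sub_one S _ fun w hw =>
    ((finite_setOf_two_le_occ S).mem_toFinset.mp hw).2
  omega

/-- For a string `S` of length `n ≥ 2`, the sum of net frequencies over
all distinct nonempty repeats of `S` is at most `2n - 2`. -/
theorem stmt5 (S : List Γ) (hn : 2 ≤ S.length) :
    ∑ᶠ w ∈ {w : List Γ | w ≠ [] ∧ 2 ≤ occ S w}, phi S w ≤ 2 * S.length - 2 :=
  stmt5_general S
end

section
/- Let S be a string of length n ≥ 2 whose last character $ = S[n] occurs at no other position of S. Suppose S[1..n−1] has at least one nonempty suffix that occurs at least twice in S, and let w be the longest such suffix. Then |w| ≤ n − 2, and, letting α = S[n−1−|w|] (so that αw is a suffix of S[1..n−1]), we have occ_S(αw) = 1 and (α, $) ∈ Φ_S(w). -/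
variable {Γ : Type*} [DecidableEq Γ]

/-! Since `c` occurs in `T ++ [c]` only at the last position, every word ending in `c`, and also
`T` itself, occurs at most once there. Hence `w` is a proper suffix of `T`, so the character `α`
preceding it exists, and maximality of `w` forces the longer suffix `α :: w` to occur only once. -/

open List

theorem List.take_length_eq_iff_isPrefix {α : Type*} {u l : List α} :
    l.take u.length = u ↔ u <+: l := by
  rw [prefix_iff_eq_take, eq_comm]

theorem List.exists_cons_isSuffix_of_length_lt {α : Type*} {w T : List α} (h : w <:+ T)
    (hlt : w.length < T.length) : ∃ a, a :: w <:+ T := by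
  obtain ⟨t, rfl⟩ := h
  have ht : t ≠ [] := by rintro rfl; simp at hlt
  obtain ⟨t', a, rfl⟩ := t.eq_nil_or_concat.resolve_left ht
  exact ⟨a, t', by simp⟩

theorem occ_eq_card_filter_isPrefix (S u : List Γ) :
    occ S u = ((Finset.range S.length).filter fun i => u <+: S.drop i).card := by
  simp_rw [← take_length_eq_iff_isPrefix]
  rfl

theorem occ_le_one_of_forall_eq {S u : List Γ} (i₀ : ℕ)
    (h : ∀ i < S.length, u <+: S.drop i → i = i₀) : occ S u ≤ 1 := by
  rw [occ_eq_card_filter_isPrefix]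
  refine Finset.card_le_one.2 fun i hi j hj => ?_
  simp only [Finset.mem_filter, Finset.mem_range] at hi hj
  rw [h i hi.1 hi.2, h j hj.1 hj.2]

theorem one_le_occ_of_isInfix {S u : List Γ} (hu : u ≠ []) (h : u <:+: S) : 1 ≤ occ S u := by
  obtain ⟨s, t, rfl⟩ := h
  rw [occ_eq_card_filter_isPrefix]
  refine Finset.card_pos.2 ⟨s.length, Finset.mem_filter.2 ⟨Finset.mem_range.2 ?_, ?_⟩⟩
  · simp [length_pos_iff.2 hu]
  · simp

section EndMarker

variable {T : List Γ} {c : Γ}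

theorem occ_append_singleton_le_one (hc : c ∉ T) (u : List Γ) :
    occ (T ++ [c]) (u ++ [c]) ≤ 1 := by
  refine occ_le_one_of_forall_eq (T.length - u.length) fun i hi hpre => ?_
  rw [length_append, length_singleton] at hi
  rw [drop_append_of_le_length (by omega), prefix_concat_iff] at hpre
  rcases hpre with heq | hpre
  · have := congrArg length heq
    simp only [length_append, length_singleton, length_drop] at this
    omega
  · exact absurd (mem_of_mem_drop (hpre.subset mem_concat_self)) hc

theorem occ_self_append_singleton_le_one (hc : c ∉ T) : occ (T ++ [c]) T ≤ 1 := by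
  refine occ_le_one_of_forall_eq 0 fun i hi hpre => ?_
  rw [length_append, length_singleton] at hi
  rw [drop_append_of_le_length (by omega), prefix_concat_iff] at hpre
  rcases hpre with heq | hpre
  · exact absurd (by rw [heq]; exact mem_concat_self) hc
  · have := hpre.length_le
    rw [length_drop] at this
    omega

theorem occ_append_singleton_eq_one (hc : c ∉ T) {u : List Γ} (hu : u <:+ T) :
    occ (T ++ [c]) (u ++ [c]) = 1 :=
  le_antisymm (occ_append_singleton_le_one hc u)
    (one_le_occ_of_isInfix (by simp) (suffix_append_self_iff.2 hu).isInfix)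

end EndMarker

theorem stmt6_general (S T : List Γ) (c : Γ) (hS : S = T ++ [c]) (hc : c ∉ T)
    (w : List Γ) (hsuf : w <:+ T) (hocc : 2 ≤ occ S w)
    (hlong : ∀ w' : List Γ, w' ≠ [] → w' <:+ T → 2 ≤ occ S w' → w'.length ≤ w.length) :
    w.length ≤ S.length - 2 ∧
    ∃ α : Γ, (α :: w) <:+ T ∧ occ S (α :: w) = 1 ∧ (α, c) ∈ Phi S w := by
  subst hS
  have hwT : w.length < T.length := by
    refine lt_of_le_of_ne hsuf.length_le fun hlen => ?_
    obtain rfl := hsuf.eq_of_length hlen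
    have := occ_self_append_singleton_le_one hc
    omega
  obtain ⟨α, hα⟩ := exists_cons_isSuffix_of_length_lt hsuf hwT
  have hαw : occ (T ++ [c]) (α :: w) = 1 := by
    refine le_antisymm (not_lt.1 fun h => ?_)
      (one_le_occ_of_isInfix (cons_ne_nil _ _) (hα.isInfix.trans (prefix_append T [c]).isInfix))
    simpa using hlong _ (cons_ne_nil _ _) hα h
  refine ⟨by simp; omega, α, hα, hαw, occ_append_singleton_eq_one hc hα, hαw,
    occ_append_singleton_eq_one hc hsuf⟩

/-- Let `S = T ++ [c]` where the last character `c` occurs at no other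
position of `S` (i.e. `c ∉ T`), with `|S| ≥ 2`. If `w` is the longest nonempty suffix
of `T = S[1..n-1]` occurring at least twice in `S`, then `|w| ≤ n - 2` and, for the
character `α` with `αw` a suffix of `T` (i.e. `α = S[n-1-|w|]`), we have
`occ S (αw) = 1` and `(α, c) ∈ Phi S w`. -/
theorem stmt6 (S T : List Γ) (c : Γ) (hS : S = T ++ [c]) (hc : c ∉ T)
    (hn : 2 ≤ S.length)
    (w : List Γ) (hw : w ≠ []) (hsuf : w <:+ T) (hocc : 2 ≤ occ S w)
    (hlong : ∀ w' : List Γ, w' ≠ [] → w' <:+ T → 2 ≤ occ S w' → w'.length ≤ w.length) :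
    w.length ≤ S.length - 2 ∧
    ∃ α : Γ, (α :: w) <:+ T ∧ occ S (α :: w) = 1 ∧ (α, c) ∈ Phi S w :=
  stmt6_general S T c hS hc w hsuf hocc hlong
end

section
/- Let S be a string, a a character, and u a nonempty prefix of S with occ_S(u) ≥ 2 such that no strictly longer prefix of S occurs at least twice in S (u is the longest repeated prefix of S). If occ_S(au) = 0, then |u| < |S| and, setting b = S[|u|+1], we have (a, b) ∈ Φ_{aS}(u) and (a, b) ∉ Φ_S(u); moreover occ_{aS}(u) ≥ 2. -/
/-!
Prepending `a` adds one occurrence (at position 0) of each prefix of `a :: S` and none of any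
other word. As `a :: u` does not occur in `S`, the words `a :: u` and `a :: u ++ [b]` thus occur
exactly once in `a :: S`. By maximality of `u`, `u ++ [b]` occurs once in `S`, and it gains no
occurrence, since the prefix of `a :: S` of its length is `a :: u`. Finally `u ≠ S`, because `S`
occurs only once in itself.
-/

variable {Γ : Type*} [DecidableEq Γ]

theorem occ_eq_countP_isPrefix (S w : List Γ) :
    occ S w = (List.range S.length).countP fun i => w <+: S.drop i := by
  simp only [occ, ← List.countP_eq_length_filter, List.prefix_iff_eq_take, eq_comm]

@[simp]
theorem occ_nil_left (w : List Γ) : occ [] w = 0 := rfl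

theorem occ_cons (a : Γ) (S w : List Γ) :
    occ (a :: S) w = occ S w + if w <+: a :: S then 1 else 0 := by
  rw [occ_eq_countP_isPrefix, occ_eq_countP_isPrefix, List.length_cons, List.range_succ_eq_map,
    List.countP_cons, List.countP_map]
  simp [Function.comp_def]

theorem occ_le_occ_cons (a : Γ) (S w : List Γ) : occ S w ≤ occ (a :: S) w := by
  rw [occ_cons]
  exact Nat.le_add_right _ _

theorem occ_cons_of_isPrefix {a : Γ} {S w : List Γ} (h : w <+: a :: S) :
    occ (a :: S) w = occ S w + 1 := by
  rw [occ_cons, if_pos h]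

theorem occ_cons_of_not_isPrefix {a : Γ} {S w : List Γ} (h : ¬ w <+: a :: S) :
    occ (a :: S) w = occ S w := by
  rw [occ_cons, if_neg h, Nat.add_zero]

theorem occ_eq_zero_of_length_lt {S w : List Γ} (h : S.length < w.length) : occ S w = 0 := by
  rw [occ_eq_countP_isPrefix, List.countP_eq_zero]
  intro i _ hi
  have := (decide_eq_true_iff.mp hi).length_le
  grind

theorem occ_self_le_one (S : List Γ) : occ S S ≤ 1 := by
  cases S with
  | nil => simp
  | cons a S =>
    rw [occ_cons_of_isPrefix (List.prefix_refl _),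
      occ_eq_zero_of_length_lt (by simp)]

theorem occ_antitone_of_isPrefix (S : List Γ) {w₁ w₂ : List Γ} (h : w₁ <+: w₂) :
    occ S w₂ ≤ occ S w₁ := by
  simp only [occ_eq_countP_isPrefix]
  exact List.countP_mono_left fun _ _ hi => by simpa using h.trans (by simpa using hi)

theorem occ_pos_of_isPrefix {S w : List Γ} (hw : w ≠ []) (h : w <+: S) : 0 < occ S w := by
  rw [occ_eq_countP_isPrefix, List.countP_pos_iff]
  exact ⟨0, by simpa using (List.length_pos_iff.mpr hw).trans_le h.length_le, by simpa using h⟩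

theorem stmt8_general (S : List Γ) (a : Γ) (u : List Γ)
    (hpre : u <+: S) (hrep : 2 ≤ occ S u)
    (hlong : ∀ u' : List Γ, u' <+: S → 2 ≤ occ S u' → u'.length ≤ u.length)
    (hzero : occ S (a :: u) = 0) :
    u.length < S.length ∧
    2 ≤ occ (a :: S) u ∧
    ∀ b : Γ, (u ++ [b]) <+: S →
      (a, b) ∈ Phi (a :: S) u ∧ (a, b) ∉ Phi S u := by
  have hlen : u.length < S.length := by
    by_contra! h
    obtain rfl := hpre.eq_of_length_le h
    exact absurd (occ_self_le_one u) (by omega)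
  have hcons : a :: u <+: a :: S := List.cons_prefix_cons.mpr ⟨rfl, hpre⟩
  refine ⟨hlen, hrep.trans (occ_le_occ_cons a S u), fun b hb => ⟨⟨?_, ?_, ?_⟩, fun h => ?_⟩⟩
  · have hzero' : occ S (a :: (u ++ [b])) = 0 :=
      Nat.eq_zero_of_le_zero (hzero ▸ occ_antitone_of_isPrefix S (by simp))
    rw [occ_cons_of_isPrefix (by simpa using hb), hzero']
  · rw [occ_cons_of_isPrefix hcons, hzero]
  · have hunique : occ S (u ++ [b]) = 1 := by
      have := occ_pos_of_isPrefix (by simp) hb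
      have := mt (hlong _ hb) (by simp)
      omega
    have hnot : ¬ u ++ [b] <+: a :: S := fun h => by
      have heq : u ++ [b] = a :: u :=
        (List.prefix_of_prefix_length_le h hcons (by simp)).eq_of_length (by simp)
      rw [heq, hzero] at hunique
      exact Nat.zero_ne_one hunique
    rw [occ_cons_of_not_isPrefix hnot, hunique]
  · exact absurd (hzero ▸ h.2.1) (by simp)

/-- Let `u` be the longest repeated prefix of `S`, nonempty, and suppose
`occ S (a :: u) = 0`. Then `|u| < |S|` and, with `b = S[|u|+1]` (so `u ++ [b]` is a
prefix of `S`), `(a, b) ∈ Phi (a :: S) u`, `(a, b) ∉ Phi S u`, and `occ (a :: S) u ≥ 2`. -/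
theorem stmt8 (S : List Γ) (a : Γ) (u : List Γ) (hu : u ≠ [])
    (hpre : u <+: S) (hrep : 2 ≤ occ S u)
    (hlong : ∀ u' : List Γ, u' <+: S → 2 ≤ occ S u' → u'.length ≤ u.length)
    (hzero : occ S (a :: u) = 0) :
    u.length < S.length ∧
    2 ≤ occ (a :: S) u ∧
    ∀ b : Γ, (u ++ [b]) <+: S →
      (a, b) ∈ Phi (a :: S) u ∧ (a, b) ∉ Phi S u :=
  stmt8_general S a u hpre hrep hlong hzero
end

section
/- Let S be a string and a a character. There is at most one nonempty prefix w of S with occ_S(w) ≥ 2 for which there exists a character β with (a, β) ∈ Φ_S(w). That is, if w and w' are nonempty prefixes of S, each occurring at least twice in S, and (a, β) ∈ Φ_S(w) and (a, β') ∈ Φ_S(w') for some characters β, β', then w = w'. -/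
variable {Γ : Type*} [DecidableEq Γ]

lemma occ_exists (S u : List Γ) (h : occ S u = 1) : ∃ i, u <+: S.drop i := by
  unfold occ at h
  obtain ⟨k, hk⟩ := List.length_eq_one_iff.mp h
  have hmem : k ∈ (List.range S.length).filter fun i => (S.drop i).take u.length = u := by
    rw [hk]; exact List.mem_singleton.mpr rfl
  have := (List.mem_filter.mp hmem).2
  exact ⟨k, List.prefix_iff_eq_take.mpr (by simp at this; exact this.symm)⟩

lemma occ_unique (S u : List Γ) (hu : u ≠ []) (h : occ S u = 1)
    {i j : ℕ} (hi : u <+: S.drop i) (hj : u <+: S.drop j) : i = j := by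
  unfold occ at h
  obtain ⟨k, hk⟩ := List.length_eq_one_iff.mp h
  have mem : ∀ m : ℕ, u <+: S.drop m →
      m ∈ (List.range S.length).filter fun i => (S.drop i).take u.length = u := by
    intro m hm
    refine List.mem_filter.mpr ⟨List.mem_range.mpr ?_, by simpa using (List.prefix_iff_eq_take.mp hm).symm⟩
    by_contra hlt
    push_neg at hlt
    have : S.drop m = [] := List.drop_eq_nil_of_le hlt
    rw [this] at hm
    exact hu (List.prefix_nil.mp hm)
  have h1 := mem i hi; have h2 := mem j hj
  rw [hk] at h1 h2
  simp at h1 h2; omega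

lemma cons_prefix_drop {S : List Γ} {c : Γ} {v : List Γ} {i : ℕ}
    (h : c :: v <+: S.drop i) : v <+: S.drop (i + 1) := by
  obtain ⟨r, hr⟩ := h
  have : S.drop (i+1) = v ++ r := by
    rw [← List.drop_drop, ← hr]; simp
  exact ⟨r, this.symm⟩

lemma key (S : List Γ) (a : Γ) (w w' : List Γ) (β β' : Γ)
    (hpre' : w' <+: S) (hlt : w <+: w') (hne : w ≠ w')
    (h1 : occ S (a :: (w ++ [β])) = 1) (h2 : occ S (a :: w) = 1)
    (h3 : occ S (w ++ [β]) = 1)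
    (h1' : occ S (a :: (w' ++ [β'])) = 1) : False := by
  -- w' = w ++ c :: t
  obtain ⟨r, hr⟩ := hlt
  have hrne : r ≠ [] := by rintro rfl; simp at hr; exact hne hr
  obtain ⟨c, t, rfl⟩ := List.exists_cons_of_ne_nil hrne
  -- occurrence of a :: (w' ++ [β']) at some p
  obtain ⟨p, hp⟩ := occ_exists S _ h1'
  -- occurrence of a :: (w ++ [β]) at some q
  obtain ⟨q, hq⟩ := occ_exists S _ h1
  -- both contain a :: w, so p = q
  have haw_p : a :: w <+: S.drop p :=
    List.IsPrefix.trans (by rw [← hr]; exact ⟨c :: t ++ [β'], by simp⟩) hp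
  have haw_q : a :: w <+: S.drop q :=
    List.IsPrefix.trans ⟨[β], by simp⟩ hq
  have hpq : p = q := occ_unique S _ (by simp) h2 haw_p haw_q
  subst hpq
  -- compare the two prefixes of S.drop p
  have hcomp : a :: (w ++ [β]) <+: a :: (w' ++ [β']) :=
    List.prefix_of_prefix_length_le hq hp (by rw [← hr]; simp)
  rw [← hr] at hcomp
  have : [β] <+: c :: t ++ [β'] := by
    rw [List.cons_prefix_cons] at hcomp
    have := hcomp.2
    rw [List.append_assoc] at this
    exact (List.prefix_append_right_inj w).mp (by simpa using this)
  have hβc : β = c := by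
    rcases this with ⟨s, hs⟩
    simp at hs; exact hs.1
  subst hβc
  -- w ++ [β] occurs at 0 and at p+1
  have occ0 : w ++ [β] <+: S.drop 0 := by
    simp only [List.drop_zero]
    exact List.IsPrefix.trans (by rw [← hr]; exact ⟨t, by simp⟩) hpre'
  have occp : w ++ [β] <+: S.drop (p + 1) := by
    apply cons_prefix_drop (c := a)
    refine List.IsPrefix.trans ?_ hp
    rw [← hr]
    exact ⟨t ++ [β'], by simp⟩
  have := occ_unique S _ (by simp) h3 occ0 occp
  omega

/-- There is at most one nonempty prefix `w` of `S`, occurring at least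
twice in `S`, such that `(a, β) ∈ Phi S w` for some character `β`. -/
theorem stmt12 (S : List Γ) (a : Γ)
    (w w' : List Γ) (hw : w ≠ []) (hw' : w' ≠ [])
    (hpre : w <+: S) (hpre' : w' <+: S)
    (hrep : 2 ≤ occ S w) (hrep' : 2 ≤ occ S w')
    (β β' : Γ) (h : (a, β) ∈ Phi S w) (h' : (a, β') ∈ Phi S w') :
    w = w' := by
  obtain ⟨h1, h2, h3⟩ := h
  obtain ⟨h1', h2', h3'⟩ := h'
  by_contra hne
  rcases List.prefix_or_prefix_of_prefix hpre hpre' with hp | hp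
  · exact key S a w w' β β' hpre' hp hne h1 h2 h3 h1'
  · exact key S a w' w β' β hpre hp (Ne.symm hne) h1' h2' h3' h1
end

section
/- Let S be a string and a a character. There is at most one nonempty string w with occ_S(w) ≥ 2 for which there exist characters α, β with (α, β) ∈ Φ_S(w) and wβ a prefix of aS. That is, if w and w' both occur at least twice in S, (α, β) ∈ Φ_S(w), (α', β') ∈ Φ_S(w'), and both wβ and w'β' are prefixes of aS, then w = w'. -/
variable {Γ : Type*} [DecidableEq Γ]

lemma occ_anti (S u v : List Γ) (h : u <+: v) : occ S v ≤ occ S u := by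
  unfold occ
  apply List.Sublist.length_le
  apply List.monotone_filter_right
  intro i hi
  simp only [decide_eq_true_eq] at hi ⊢
  obtain ⟨t, ht⟩ := h
  have hl : u.length ≤ v.length := by subst ht; simp
  have h2 := congrArg (List.take u.length) hi
  rw [List.take_take, min_eq_left hl] at h2
  rw [h2, ← ht, List.take_left]

lemma stmt14_aux (S : List Γ) (a : Γ)
    (w w' : List Γ)
    (hrep' : 2 ≤ occ S w')
    (β β' : Γ) (hocc : occ S (w ++ [β]) = 1)
    (hpre : (w ++ [β]) <+: (a :: S)) (hpre' : (w' ++ [β']) <+: (a :: S))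
    (hlen : w.length ≤ w'.length) :
    w = w' := by
  rcases lt_or_eq_of_le hlen with hlt | heq
  · -- w ++ [β] is a prefix of w', contradiction
    exfalso
    have h1 : (w ++ [β]) <+: (w' ++ [β']) := by
      apply List.prefix_of_prefix_length_le hpre hpre'
      simp only [List.length_append, List.length_singleton]
      omega
    have h2 : (w ++ [β]) <+: w' := by
      have h3 : (w ++ [β]) <+: (w' ++ [β']).take w'.length := by
        rw [List.prefix_take_iff]
        exact ⟨h1, by simp; omega⟩
      simpa [List.take_left] using h3
    have := occ_anti S (w ++ [β]) w' h2
    omega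
  · have h1 : w <+: (a :: S) := (List.prefix_append w [β]).trans hpre
    have h2 : w' <+: (a :: S) := (List.prefix_append w' [β']).trans hpre'
    exact List.IsPrefix.eq_of_length (List.prefix_of_prefix_length_le h1 h2 hlen)
      heq

/-- There is at most one nonempty string `w` occurring at least twice in
`S` for which there exist characters `α, β` with `(α, β) ∈ Phi S w` and `w ++ [β]` a
prefix of `a :: S`. -/
theorem stmt14 (S : List Γ) (a : Γ)
    (w w' : List Γ) (hw : w ≠ []) (hw' : w' ≠ [])
    (hrep : 2 ≤ occ S w) (hrep' : 2 ≤ occ S w')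
    (α β α' β' : Γ) (h : (α, β) ∈ Phi S w) (h' : (α', β') ∈ Phi S w')
    (hpre : (w ++ [β]) <+: (a :: S)) (hpre' : (w' ++ [β']) <+: (a :: S)) :
    w = w' := by
  rcases le_total w.length w'.length with hle | hle
  · exact stmt14_aux S a w w' hrep' β β' h.2.2 hpre hpre' hle
  · exact (stmt14_aux S a w' w hrep β' β h'.2.2 hpre' hpre hle).symm
end

section
/- For any string S of length n ≥ 1, the number of distinct maximal repeats of S is at most n − 1. -/
variable {Γ : Type*} [DecidableEq Γ]

/-! ### Laminar family machinery -/

/-- A laminar family: any two members are disjoint or nested. -/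
def Laminar (F : Finset (Finset ℕ)) : Prop :=
  ∀ A ∈ F, ∀ B ∈ F, A ∩ B = ∅ ∨ A ⊆ B ∨ B ⊆ A

/-- The maximal elements of a family. -/
def maxl (F : Finset (Finset ℕ)) : Finset (Finset ℕ) :=
  F.filter (fun A => ∀ B ∈ F, A ⊆ B → B = A)

lemma maxl_subset (F : Finset (Finset ℕ)) : maxl F ⊆ F := Finset.filter_subset _ _

lemma exists_maxl_superset (F : Finset (Finset ℕ)) {B : Finset ℕ} (hB : B ∈ F) :
    ∃ A ∈ maxl F, B ⊆ A := by
  obtain ⟨A, hA, hmax⟩ := Finset.exists_max_image (F.filter (B ⊆ ·)) Finset.card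
    ⟨B, Finset.mem_filter.2 ⟨hB, subset_rfl⟩⟩
  rw [Finset.mem_filter] at hA
  refine ⟨A, Finset.mem_filter.2 ⟨hA.1, ?_⟩, hA.2⟩
  intro D hD hAD
  exact (Finset.eq_of_subset_of_card_le hAD
    (hmax D (Finset.mem_filter.2 ⟨hD, hA.2.trans hAD⟩))).symm

lemma maxl_nonempty {F : Finset (Finset ℕ)} (h : F.Nonempty) : (maxl F).Nonempty := by
  obtain ⟨B, hB⟩ := h
  obtain ⟨A, hA, _⟩ := exists_maxl_superset F hB
  exact ⟨A, hA⟩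

lemma maxl_pairwise_disjoint {F : Finset (Finset ℕ)} (hlam : Laminar F) :
    ∀ A ∈ maxl F, ∀ B ∈ maxl F, A ≠ B → Disjoint A B := by
  intro A hA B hB hAB
  rw [maxl, Finset.mem_filter] at hA hB
  rcases hlam A hA.1 B hB.1 with h | h | h
  · exact Finset.disjoint_iff_inter_eq_empty.2 h
  · exact absurd (hA.2 B hB.1 h) (Ne.symm hAB)
  · exact absurd (hB.2 A hA.1 h) hAB

/-- The component decomposition bound. -/
lemma comp_bound {F : Finset (Finset ℕ)} {U : Finset ℕ}
    (hsub : ∀ A ∈ F, A ⊆ U) (hlam : Laminar F)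
    (hb : ∀ A ∈ maxl F, (F.filter (· ⊆ A)).card + 1 ≤ A.card) :
    F.card + (maxl F).card ≤ U.card := by
  have hcover : F ⊆ (maxl F).biUnion (fun A => F.filter (· ⊆ A)) := by
    intro B hB
    obtain ⟨A, hA, hBA⟩ := exists_maxl_superset F hB
    exact Finset.mem_biUnion.2 ⟨A, hA, Finset.mem_filter.2 ⟨hB, hBA⟩⟩
  have h1 : F.card ≤ ∑ A ∈ maxl F, (F.filter (· ⊆ A)).card :=
    (Finset.card_le_card hcover).trans (Finset.card_biUnion_le)
  have h2 : ∑ A ∈ maxl F, ((F.filter (· ⊆ A)).card + 1) ≤ ∑ A ∈ maxl F, A.card :=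
    Finset.sum_le_sum hb
  have h3 : ((maxl F).biUnion id).card = ∑ A ∈ maxl F, A.card :=
    Finset.card_biUnion (fun A hA B hB hAB => maxl_pairwise_disjoint hlam A hA B hB hAB)
  have h4 : ((maxl F).biUnion id).card ≤ U.card := by
    apply Finset.card_le_card
    intro x hx
    obtain ⟨A, hA, hxA⟩ := Finset.mem_biUnion.1 hx
    exact hsub A (maxl_subset F hA) hxA
  rw [Finset.sum_add_distrib, Finset.sum_const, smul_eq_mul, mul_one] at h2
  omega

/-- A laminar family of sets of size at least 2 inside a universe `U` has at most
`|U| - 1` members. -/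
lemma laminar_card_bound : ∀ (n : ℕ) (U : Finset ℕ) (F : Finset (Finset ℕ)),
    U.card ≤ n → (∀ A ∈ F, A ⊆ U) → (∀ A ∈ F, 2 ≤ A.card) → Laminar F →
    F.Nonempty → F.card + 1 ≤ U.card := by
  intro n
  induction n with
  | zero =>
    intro U F hU hsub h2 _ hFne
    obtain ⟨A, hA⟩ := hFne
    have := Finset.card_le_card (hsub A hA)
    have := h2 A hA
    omega
  | succ n ih =>
    intro U F hU hsub h2 hlam hFne
    have hb : ∀ A ∈ maxl F, (F.filter (· ⊆ A)).card + 1 ≤ A.card := by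
      intro A hA
      have hAF : A ∈ F := maxl_subset F hA
      set P := F.filter (fun B => B ⊆ A ∧ B ≠ A) with hP
      have hPsub : ∀ B ∈ P, B ⊆ A := fun B hB => (Finset.mem_filter.1 hB).2.1
      have hPss : ∀ B ∈ P, B ⊂ A := fun B hB =>
        (Finset.ssubset_iff_subset_ne).2 ⟨(Finset.mem_filter.1 hB).2.1,
          (Finset.mem_filter.1 hB).2.2⟩
      have hFA : F.filter (· ⊆ A) ⊆ insert A P := by
        intro B hB
        rw [Finset.mem_filter] at hB
        by_cases hBA : B = A
        · exact Finset.mem_insert.2 (Or.inl hBA)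
        · exact Finset.mem_insert.2 (Or.inr (Finset.mem_filter.2 ⟨hB.1, hB.2, hBA⟩))
      have hcard : (F.filter (· ⊆ A)).card ≤ P.card + 1 := by
        have := Finset.card_le_card hFA
        have := Finset.card_insert_le A P
        omega
      have hA2 : 2 ≤ A.card := h2 A hAF
      rcases P.eq_empty_or_nonempty with hPe | hPne
      · rw [hPe] at hcard; simp at hcard; omega
      have hPlam : Laminar P := fun B hB C hC =>
        hlam B (Finset.filter_subset _ _ hB) C (Finset.filter_subset _ _ hC)
      have hP2 : ∀ B ∈ P, 2 ≤ B.card := fun B hB => h2 B (Finset.filter_subset _ _ hB)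
      have hIH : ∀ C ∈ maxl P, (P.filter (· ⊆ C)).card + 1 ≤ C.card := by
        intro C hC
        have hCP : C ∈ P := maxl_subset P hC
        have hCA : C ⊂ A := hPss C hCP
        have hCn : C.card ≤ n := by
          have h1 := Finset.card_lt_card hCA
          have h2' := Finset.card_le_card (hsub A hAF)
          omega
        exact ih C (P.filter (· ⊆ C)) hCn
          (fun B hB => (Finset.mem_filter.1 hB).2)
          (fun B hB => hP2 B (Finset.filter_subset _ _ hB))
          (fun B hB C' hC' => hPlam B (Finset.filter_subset _ _ hB) C'
            (Finset.filter_subset _ _ hC'))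
          ⟨C, Finset.mem_filter.2 ⟨hCP, subset_rfl⟩⟩
      have hPbound : P.card + 2 ≤ A.card := by
        have hmne : (maxl P).Nonempty := maxl_nonempty hPne
        rcases Nat.lt_or_ge (maxl P).card 2 with hm1 | hm2
        · obtain ⟨C, hC⟩ : ∃ C, maxl P = {C} :=
            Finset.card_eq_one.1 (le_antisymm (by omega) (Finset.card_pos.2 hmne))
          have hCP : C ∈ P := maxl_subset P (hC ▸ Finset.mem_singleton_self C)
          have hPC : P ⊆ P.filter (· ⊆ C) := by
            intro B hB
            obtain ⟨D, hD, hBD⟩ := exists_maxl_superset P hB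
            rw [hC, Finset.mem_singleton] at hD
            exact Finset.mem_filter.2 ⟨hB, hD ▸ hBD⟩
          have h5 := hIH C (hC ▸ Finset.mem_singleton_self C)
          have h6 := Finset.card_le_card hPC
          have h7 := Finset.card_lt_card (hPss C hCP)
          omega
        · have := comp_bound hPsub hPlam hIH
          omega
      omega
    have := comp_bound hsub hlam hb
    have := Finset.card_pos.2 (maxl_nonempty hFne)
    omega

/-! ### Occurrence sets of strings -/

/-- The set of (0-based) starting positions of occurrences of `w` in `S`, as a `Finset`. -/
def occF (S w : List Γ) : Finset ℕ :=
  (Finset.range S.length).filter fun i => (S.drop i).take w.length = w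

lemma occ_eq_card_s16 (S w : List Γ) : occ S w = (occF S w).card := rfl

lemma mem_occF {S w : List Γ} {i : ℕ} :
    i ∈ occF S w ↔ i < S.length ∧ (S.drop i).take w.length = w := by
  simp [occF]

lemma prefix_of_mem {S w : List Γ} {i : ℕ} (h : i ∈ occF S w) : w <+: S.drop i := by
  rcases mem_occF.1 h with ⟨_, h2⟩
  exact h2 ▸ List.take_prefix _ _

lemma add_length_le {S w : List Γ} {i : ℕ} (h : i ∈ occF S w) :
    i + w.length ≤ S.length := by
  rcases mem_occF.1 h with ⟨h1, _⟩
  have h2 := (prefix_of_mem h).length_le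
  rw [List.length_drop] at h2
  omega

lemma mem_occF_of_prefix {S w : List Γ} {i : ℕ} (hi : i < S.length) (h : w <+: S.drop i) :
    i ∈ occF S w := mem_occF.2 ⟨hi, (List.prefix_iff_eq_take.mp h).symm⟩

lemma occF_mono {S w w' : List Γ} (h : w <+: w') : occF S w' ⊆ occF S w := fun i hi =>
  mem_occF_of_prefix (mem_occF.1 hi).1 (h.trans (prefix_of_mem hi))

lemma suffix_mem_occF {S w : List Γ} (hw : w ≠ []) (h : w <:+ S) :
    (S.length - w.length) ∈ occF S w := by
  obtain ⟨t, rfl⟩ := h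
  have hl : (t ++ w).length - w.length = t.length := by simp
  rw [hl]
  apply mem_occF_of_prefix
  · have : 0 < w.length := List.length_pos_iff.2 hw
    simp only [List.length_append]
    omega
  · rw [List.drop_left]

lemma prefix_of_mem_mem {S w w' : List Γ} {i : ℕ} (h : i ∈ occF S w) (h' : i ∈ occF S w')
    (hl : w.length ≤ w'.length) : w <+: w' :=
  List.prefix_of_prefix_length_le (prefix_of_mem h) (prefix_of_mem h') hl

/-- Key injectivity step: a right-maximal nonempty `w` and a strictly longer `w'`
occurring somewhere have different occurrence sets. -/
lemma occF_ne_of_lt {S w w' : List Γ}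
    (hw1 : w ≠ []) (hrm : RightMaximal S w)
    (hl : w.length < w'.length) : occF S w ≠ occF S w' := by
  intro heq
  have hnsuf : ¬ w <:+ S := by
    intro hs
    have hm := suffix_mem_occF hw1 hs
    have h1 := add_length_le (heq ▸ hm)
    have h2 := hs.length_le
    omega
  rcases hrm with hs | ⟨β, β', hbb, hb, hb'⟩
  · exact hnsuf hs
  have key : ∀ β₀ : Γ, 1 ≤ occ S (w ++ [β₀]) → w ++ [β₀] <+: w' := by
    intro β₀ hb₀
    rw [occ_eq_card_s16] at hb₀
    obtain ⟨j, hj⟩ : (occF S (w ++ [β₀])).Nonempty := Finset.card_pos.1 (by omega)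
    have hjw : j ∈ occF S w := occF_mono (List.prefix_append w [β₀]) hj
    have hjw' : j ∈ occF S w' := heq ▸ hjw
    refine prefix_of_mem_mem hj hjw' ?_
    simp only [List.length_append, List.length_singleton]
    omega
  have h1 := key β hb
  have h2 := key β' hb'
  have h3 : w ++ [β] = w ++ [β'] :=
    (List.prefix_of_prefix_length_le h1 h2 (by simp)).eq_of_length (by simp)
  exact hbb (by simpa using h3)

/-- For any string `S` of length `n ≥ 1`, the number of distinct maximal
repeats of `S` is at most `n - 1`. -/
theorem stmt16 (S : List Γ) (hn : 1 ≤ S.length) :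
    {w : List Γ | MaximalRepeat S w}.Finite ∧
    {w : List Γ | MaximalRepeat S w}.ncard ≤ S.length - 1 := by
  set T := {w : List Γ | MaximalRepeat S w} with hT
  have hmemT : ∀ w ∈ T, MaximalRepeat S w := fun w hw => hw
  have hinj : Set.InjOn (occF S) T := by
    intro w hw w' hw' heq
    by_contra hne
    have hw2 := (hmemT w hw).2.1
    rcases Nat.lt_trichotomy w.length w'.length with h | h | h
    · exact occF_ne_of_lt (hmemT w hw).1 (hmemT w hw).2.2.2 h heq
    · obtain ⟨i, hi⟩ : (occF S w).Nonempty := Finset.card_pos.1 (by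
        rw [← occ_eq_card_s16]; omega)
      have hi' : i ∈ occF S w' := heq ▸ hi
      exact hne ((prefix_of_mem_mem hi hi' h.le).eq_of_length h)
    · exact occF_ne_of_lt (hmemT w' hw').1 (hmemT w' hw').2.2.2 h heq.symm
  have hfin : T.Finite := by
    apply Set.Finite.of_finite_image _ hinj
    apply Set.Finite.subset (Finset.finite_toSet ((Finset.range S.length).powerset))
    rintro A ⟨w, -, rfl⟩
    exact Finset.mem_coe.2 (Finset.mem_powerset.2 (Finset.filter_subset _ _))
  refine ⟨hfin, ?_⟩
  rcases T.eq_empty_or_nonempty with hTe | hTne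
  · simp [hTe]
  set F := hfin.toFinset.image (occF S) with hF
  have hinj' : Set.InjOn (occF S) ↑hfin.toFinset := by
    rwa [Set.Finite.coe_toFinset]
  have hcard : T.ncard = F.card := by
    rw [hF, Finset.card_image_of_injOn hinj', ← Set.ncard_coe_finset,
      Set.Finite.coe_toFinset]
  have hmem : ∀ A ∈ F, ∃ w ∈ T, occF S w = A := by
    intro A hA
    obtain ⟨w, hw, rfl⟩ := Finset.mem_image.1 hA
    exact ⟨w, (Set.Finite.mem_toFinset hfin).1 hw, rfl⟩
  have hsub : ∀ A ∈ F, A ⊆ Finset.range S.length := by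
    intro A hA
    obtain ⟨w, -, rfl⟩ := hmem A hA
    exact Finset.filter_subset _ _
  have h2 : ∀ A ∈ F, 2 ≤ A.card := by
    intro A hA
    obtain ⟨w, hw, rfl⟩ := hmem A hA
    rw [← occ_eq_card_s16]
    exact (hmemT w hw).2.1
  have hlam : Laminar F := by
    intro A hA B hB
    obtain ⟨w, -, rfl⟩ := hmem A hA
    obtain ⟨w', -, rfl⟩ := hmem B hB
    rcases Finset.eq_empty_or_nonempty (occF S w ∩ occF S w') with he | ⟨i, hi⟩
    · exact Or.inl he
    rw [Finset.mem_inter] at hi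
    rcases le_total w.length w'.length with h | h
    · exact Or.inr (Or.inr (occF_mono (prefix_of_mem_mem hi.1 hi.2 h)))
    · exact Or.inr (Or.inl (occF_mono (prefix_of_mem_mem hi.2 hi.1 h)))
  have hFne : F.Nonempty := by
    obtain ⟨w, hw⟩ := hTne
    exact ⟨occF S w, Finset.mem_image.2 ⟨w, (Set.Finite.mem_toFinset hfin).2 hw, rfl⟩⟩
  have := laminar_card_bound S.length (Finset.range S.length) F
    (by rw [Finset.card_range]) hsub h2 hlam hFne
  rw [Finset.card_range] at this
  omega
end
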